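/- Let (X_t) be generated by diffusion condensation with kernels K_t satisfying 0 < δ ≤ K_t(i,j) ≤ 1 for all t and all i,j. Then diam(X_{t+1}) ≤ (1 − δ) diam(X_t) for all t, and consequently diam(X_t) ≤ (1−δ)^t diam(X_0). -/

import Mathlib

/-!
Each new point is a convex combination `∑ₖ a k • x k` of the old ones, with weights
`a k = K i k / ∑ⱼ K i j ≥ δ / N`. Two such combinations with weights `a`, `b` share the common
mass `∑ₖ min (a k) (b k) ≥ δ`; after cancelling it, what remains are two nonnegative weight
vectors of equal mass `s ≤ 1 - δ`, and pairing them as `∑ₖ ∑ₗ pₖ qₗ (x k - x l)` shows that the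
difference of their combinations has norm at most `s · diam`.
-/

open Finset Metric

variable {ι E : Type*} [Fintype ι] [SeminormedAddCommGroup E] [NormedSpace ℝ E]

theorem norm_sum_smul_sub_sum_smul_le_of_sum_eq {x : ι → E} {D : ℝ}
    (hx : ∀ k l, ‖x k - x l‖ ≤ D) {p q : ι → ℝ} (hp : ∀ k, 0 ≤ p k) (hq : ∀ k, 0 ≤ q k)
    (hpq : ∑ k, p k = ∑ k, q k) :
    ‖∑ k, p k • x k - ∑ k, q k • x k‖ ≤ (∑ k, p k) * D := by
  set s := ∑ k, p k
  have hs : 0 ≤ s := sum_nonneg fun k _ => hp k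
  have pairing : ∑ k, ∑ l, (p k * q l) • (x k - x l) = s • (∑ k, p k • x k - ∑ k, q k • x k) := by
    simp only [smul_sub, sum_sub_distrib, mul_smul, ← smul_sum, ← sum_smul]
    rw [← hpq]
    simp only [smul_comm (p _) s, ← smul_sum]
    rfl
  have pairing_le : s * ‖∑ k, p k • x k - ∑ k, q k • x k‖ ≤ s * (s * D) := by
    calc s * ‖∑ k, p k • x k - ∑ k, q k • x k‖
        = ‖∑ k, ∑ l, (p k * q l) • (x k - x l)‖ := by
          rw [pairing, norm_smul, Real.norm_of_nonneg hs]
      _ ≤ ∑ k, ∑ l, p k * q l * D := by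
          refine norm_sum_le_of_le _ fun k _ => norm_sum_le_of_le _ fun l _ => ?_
          rw [norm_smul, Real.norm_of_nonneg (mul_nonneg (hp k) (hq l))]
          exact mul_le_mul_of_nonneg_left (hx k l) (mul_nonneg (hp k) (hq l))
      _ = s * (s * D) := by simp only [← sum_mul, ← mul_sum, ← hpq, mul_assoc]; rfl
  rcases hs.eq_or_lt with hs0 | hs0
  · have hp0 : ∀ k, p k = 0 := fun k =>
      (sum_eq_zero_iff_of_nonneg fun k _ => hp k).1 hs0.symm k (mem_univ k)
    have hq0 : ∀ k, q k = 0 := fun k =>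
      (sum_eq_zero_iff_of_nonneg fun k _ => hq k).1 (hpq ▸ hs0.symm) k (mem_univ k)
    simp [hp0, hq0, ← hs0]
  · exact le_of_mul_le_mul_left pairing_le hs0

/-- Dobrushin's bound: the common mass `∑ₖ min (a k) (b k)` of the two weight vectors cancels. -/
theorem norm_sum_smul_sub_sum_smul_le_one_sub_sum_min {x : ι → E} {D : ℝ}
    (hx : ∀ k l, ‖x k - x l‖ ≤ D) {a b : ι → ℝ} (ha1 : ∑ k, a k = 1) (hb1 : ∑ k, b k = 1) :
    ‖∑ k, a k • x k - ∑ k, b k • x k‖ ≤ (1 - ∑ k, min (a k) (b k)) * D := by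
  have key := norm_sum_smul_sub_sum_smul_le_of_sum_eq hx
    (p := fun k => a k - min (a k) (b k)) (q := fun k => b k - min (a k) (b k))
    (fun k => sub_nonneg.2 (min_le_left _ _)) (fun k => sub_nonneg.2 (min_le_right _ _))
    (by simp only [sum_sub_distrib, ha1, hb1])
  simpa only [sub_smul, sum_sub_distrib, ha1, sub_sub_sub_cancel_right] using key

theorem diam_range_sum_smul_le_of_le [Nonempty ι] {P : ι → ι → ℝ} {c : ℝ}
    (hP : ∀ i k, c ≤ P i k) (hP1 : ∀ i, ∑ k, P i k = 1) (x : ι → E) :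
    diam (Set.range fun i => ∑ k, P i k • x k) ≤ (1 - Fintype.card ι * c) * diam (Set.range x) := by
  have hx : ∀ k l, ‖x k - x l‖ ≤ diam (Set.range x) := fun k l => by
    rw [← dist_eq_norm]
    exact dist_le_diam_of_mem (Set.finite_range x).isBounded ⟨k, rfl⟩ ⟨l, rfl⟩
  refine diam_le_of_forall_dist_le_of_nonempty (Set.range_nonempty _) ?_
  rintro _ ⟨i, rfl⟩ _ ⟨j, rfl⟩
  have overlap : Fintype.card ι * c ≤ ∑ k, min (P i k) (P j k) := by
    simpa using sum_le_sum fun k (_ : k ∈ univ) => le_min (hP i k) (hP j k)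
  rw [dist_eq_norm]
  refine (norm_sum_smul_sub_sum_smul_le_one_sub_sum_min hx (hP1 i) (hP1 j)).trans ?_
  gcongr

theorem diam_range_diffusion_le [Nonempty ι] {δ : ℝ} (hδ : 0 < δ) {K : ι → ι → ℝ}
    (hK : ∀ i j, δ ≤ K i j ∧ K i j ≤ 1) (x : ι → E) :
    diam (Set.range fun i => (∑ j, K i j)⁻¹ • ∑ j, K i j • x j) ≤
      (1 - δ) * diam (Set.range x) := by
  have hrow_pos : ∀ i, 0 < ∑ j, K i j := fun i =>
    sum_pos (fun j _ => hδ.trans_le (hK i j).1) univ_nonempty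
  have hrow_le : ∀ i, ∑ j, K i j ≤ Fintype.card ι := fun i => by
    simpa using sum_le_sum fun j (_ : j ∈ univ) => (hK i j).2
  have hcard : (0 : ℝ) < Fintype.card ι := Nat.cast_pos.2 Fintype.card_pos
  have weights : (fun i => (∑ j, K i j)⁻¹ • ∑ j, K i j • x j) =
      fun i => ∑ k, (K i k / ∑ j, K i j) • x k := by
    simp only [smul_sum, smul_smul, div_eq_inv_mul]
  have bound := diam_range_sum_smul_le_of_le
    (fun i k => div_le_div₀ (hδ.le.trans (hK i k).1) (hK i k).1 (hrow_pos i) (hrow_le i))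
    (fun i => by rw [← sum_div, div_self (hrow_pos i).ne']) x
  rw [weights]
  rwa [mul_div_cancel₀ _ hcard.ne'] at bound

theorem stmt_7_general {d N : ℕ} (δ : ℝ) (hδ : 0 < δ)
    (X : ℕ → Fin N → EuclideanSpace ℝ (Fin d))
    (K : ℕ → Fin N → Fin N → ℝ)
    (hKb : ∀ t i j, δ ≤ K t i j ∧ K t i j ≤ 1)
    (hupd : ∀ t i, X (t + 1) i = (∑ j, K t i j)⁻¹ • ∑ j, K t i j • X t j) :
    (∀ t, Metric.diam (Set.range (X (t + 1))) ≤ (1 - δ) * Metric.diam (Set.range (X t))) ∧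
    (∀ t, Metric.diam (Set.range (X t)) ≤ (1 - δ) ^ t * Metric.diam (Set.range (X 0))) := by
  rcases isEmpty_or_nonempty (Fin N) with hN | hN
  · simp [Set.range_eq_empty]
  have step : ∀ t, diam (Set.range (X (t + 1))) ≤ (1 - δ) * diam (Set.range (X t)) := fun t => by
    rw [show X (t + 1) = _ from funext (hupd t)]
    exact diam_range_diffusion_le hδ (hKb t) (X t)
  have hδ1 : δ ≤ 1 := (hKb 0 hN.some hN.some).1.trans (hKb 0 hN.some hN.some).2
  exact ⟨step, fun t => le_geom (u := fun t => diam (Set.range (X t))) (sub_nonneg.2 hδ1) t fun k _ => step k⟩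

/-- With kernels bounded below by δ, diffusion condensation contracts the diameter by a
factor (1 - δ) at each step, hence geometrically. -/
theorem stmt_7 {d N : ℕ} (δ : ℝ) (hδ : 0 < δ)
    (X : ℕ → Fin N → EuclideanSpace ℝ (Fin d))
    (K : ℕ → Fin N → Fin N → ℝ)
    (hsym : ∀ t i j, K t i j = K t j i)
    (hKb : ∀ t i j, δ ≤ K t i j ∧ K t i j ≤ 1)
    (hupd : ∀ t i, X (t + 1) i = (∑ j, K t i j)⁻¹ • ∑ j, K t i j • X t j) :
    (∀ t, Metric.diam (Set.range (X (t + 1))) ≤ (1 - δ) * Metric.diam (Set.range (X t))) ∧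
    (∀ t, Metric.diam (Set.range (X t)) ≤ (1 - δ) ^ t * Metric.diam (Set.range (X 0))) :=
  stmt_7_general δ hδ X K hKb hupd
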